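/- arXiv:2406.05964 — 2 statements merged into one kernel-verified Lean document; each statement's English description precedes it below -/
import Mathlib

section
/- Under the setting of weighted regularized empirical risk minimization with κ-strongly convex ρ, if the interval [X̌_{i:}β̂ − ‖X̌_{i:}‖₂·r, X̌_{i:}β̂ + ‖X̌_{i:}‖₂·r] is contained in the set Z[ℓ_{y_i}] := {t : ∂ℓ_{y_i}(t) = {0}}, where r = √((2/κ)(P_w(β̂) − D_w(α̂))), then the dual optimum satisfies α_i* = 0. -/
/-- Subdifferential of a function `ℝ → ℝ`. -/
def subd (f : ℝ → ℝ) (t : ℝ) : Set ℝ :=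
  {g | ∀ t', f t' - f t ≥ g * (t' - t)}

/-- The set `Z[ℓ] = {t : ∂ℓ(t) = {0}}`. -/
def Zset (f : ℝ → ℝ) : Set ℝ :=
  {t | subd f t = {0}}

/-- Convex conjugate of a function `ℝ → ℝ`, with values in the extended reals. -/
noncomputable def conj (f : ℝ → ℝ) (s : ℝ) : EReal :=
  ⨆ t : ℝ, ((s * t - f t : ℝ) : EReal)

/-- Convex conjugate of a function on `ℝ^d`, with values in the extended reals. -/
noncomputable def conjV {d : ℕ} (ρ : EuclideanSpace ℝ (Fin d) → ℝ)
    (v : EuclideanSpace ℝ (Fin d)) : EReal :=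
  ⨆ β : EuclideanSpace ℝ (Fin d), (((inner ℝ v β : ℝ) - ρ β : ℝ) : EReal)

/-- Primal objective of weighted regularized empirical risk minimization. -/
noncomputable def Pobj {n d : ℕ} (ℓ : Fin n → ℝ → ℝ) (ρ : EuclideanSpace ℝ (Fin d) → ℝ)
    (X : Fin n → EuclideanSpace ℝ (Fin d)) (w : Fin n → ℝ)
    (β : EuclideanSpace ℝ (Fin d)) : ℝ :=
  (∑ i, w i * ℓ i (inner ℝ (X i) β)) + ρ β

/-- Dual objective of weighted regularized empirical risk minimization. -/
noncomputable def Dobj {n d : ℕ} (ℓ : Fin n → ℝ → ℝ) (ρ : EuclideanSpace ℝ (Fin d) → ℝ)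
    (X : Fin n → EuclideanSpace ℝ (Fin d)) (w : Fin n → ℝ) (α : Fin n → ℝ) : EReal :=
  -(∑ i, (w i : EReal) * conj (ℓ i) (-(α i))) - conjV ρ (∑ i, (w i * α i) • X i)

/-
The point `β*` lies within `r` of `β̂`: strong convexity of the primal objective gives
`κ/2 ‖β̂ - β*‖² ≤ P(β̂) - P(β*)`, and weak duality bounds this by the gap `P(β̂) - D(α̂) = κ r²/2`.
Hence `X̌ᵢβ*` lies in the given interval, where `∂ℓᵢ = {0}`, so the KKT condition
`-αᵢ* ∈ ∂ℓᵢ(X̌ᵢβ*)` forces `αᵢ* = 0`.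
-/

open Set Filter Topology

@[norm_cast]
lemma EReal.coe_finset_sum {ι : Type*} (s : Finset ι) (f : ι → ℝ) :
    ((∑ i ∈ s, f i : ℝ) : EReal) = ∑ i ∈ s, (f i : EReal) :=
  map_sum (⟨⟨Real.toEReal, EReal.coe_zero⟩, EReal.coe_add⟩ : ℝ →+ EReal) f s

lemma coe_sub_le_conj (f : ℝ → ℝ) (s t : ℝ) : ((s * t - f t : ℝ) : EReal) ≤ conj f s :=
  le_iSup (fun t => ((s * t - f t : ℝ) : EReal)) t

lemma coe_inner_sub_le_conjV {d : ℕ} (ρ : EuclideanSpace ℝ (Fin d) → ℝ)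
    (v β : EuclideanSpace ℝ (Fin d)) : ((inner ℝ v β - ρ β : ℝ) : EReal) ≤ conjV ρ v :=
  le_iSup (fun β => ((inner ℝ v β - ρ β : ℝ) : EReal)) β

theorem ConvexOn.sum {𝕜 E β ι : Type*} [Semiring 𝕜] [PartialOrder 𝕜] [AddCommMonoid E]
    [AddCommMonoid β] [PartialOrder β] [IsOrderedAddMonoid β] [SMul 𝕜 E] [Module 𝕜 β]
    {s : Set E} {f : ι → E → β} (t : Finset ι) (hs : Convex 𝕜 s)
    (hf : ∀ i ∈ t, ConvexOn 𝕜 s (f i)) : ConvexOn 𝕜 s (∑ i ∈ t, f i) := by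
  classical
  induction t using Finset.induction_on with
  | empty =>
    rw [Finset.sum_empty]
    exact convexOn_const 0 hs
  | insert a t ha ih =>
    rw [Finset.sum_insert ha]
    exact (hf a (t.mem_insert_self a)).add (ih fun i hi => hf i (Finset.mem_insert_of_mem hi))

theorem StrongConvexOn.add_sq_norm_sub_le_of_isMinOn {E : Type*} [NormedAddCommGroup E]
    [NormedSpace ℝ E] {s : Set E} {m : ℝ} {f : E → ℝ} {x₀ x : E} (hf : StrongConvexOn s m f)
    (hmin : IsMinOn f s x₀) (hx₀ : x₀ ∈ s) (hx : x ∈ s) :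
    f x₀ + m / 2 * ‖x - x₀‖ ^ 2 ≤ f x := by
  -- compare `f x₀` with `f` at `(1 - τ) • x₀ + τ • x`, then let `τ → 0⁺`
  have hseg : ∀ τ ∈ Ioo (0 : ℝ) 1, f x₀ + m / 2 * ‖x - x₀‖ ^ 2 * (1 - τ) ≤ f x := by
    rintro τ ⟨hτ0, hτ1⟩
    have hconv := hf.2 hx₀ hx (sub_nonneg.2 hτ1.le) hτ0.le (sub_add_cancel 1 τ)
    have hle := isMinOn_iff.1 hmin _
      (hf.1 hx₀ hx (sub_nonneg.2 hτ1.le) hτ0.le (sub_add_cancel 1 τ))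
    simp only [smul_eq_mul, norm_sub_rev x₀ x] at hconv
    have hscaled : τ * (f x₀ + m / 2 * ‖x - x₀‖ ^ 2 * (1 - τ)) ≤ τ * f x := by linarith
    exact le_of_mul_le_mul_left hscaled hτ0
  have hlim : Tendsto (fun τ : ℝ => f x₀ + m / 2 * ‖x - x₀‖ ^ 2 * (1 - τ)) (𝓝[>] 0)
      (𝓝 (f x₀ + m / 2 * ‖x - x₀‖ ^ 2)) := by
    refine tendsto_nhdsWithin_of_tendsto_nhds ?_
    simpa using (Continuous.tendsto (by fun_prop) 0 :
      Tendsto (fun τ : ℝ => f x₀ + m / 2 * ‖x - x₀‖ ^ 2 * (1 - τ)) (𝓝 0) _)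
  exact le_of_tendsto hlim (eventually_of_mem (Ioo_mem_nhdsGT one_pos) hseg)

theorem inner_mem_Icc_of_norm_sub_le {E : Type*} [NormedAddCommGroup E] [InnerProductSpace ℝ E]
    {x b b' : E} {r : ℝ} (h : ‖b - b'‖ ≤ r) :
    inner ℝ x b' ∈ Icc (inner ℝ x b - ‖x‖ * r) (inner ℝ x b + ‖x‖ * r) := by
  have hcs := abs_real_inner_le_norm x (b - b')
  rw [inner_sub_right] at hcs
  have hbound := hcs.trans (mul_le_mul_of_nonneg_left h (norm_nonneg x))
  constructor <;> linarith [abs_le.1 hbound]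

section ERM

variable {n d : ℕ} {ℓ : Fin n → ℝ → ℝ} {ρ : EuclideanSpace ℝ (Fin d) → ℝ}
  {X : Fin n → EuclideanSpace ℝ (Fin d)} {w : Fin n → ℝ}

theorem Dobj_le_Pobj (hw : ∀ i, 0 ≤ w i) (α : Fin n → ℝ) (β : EuclideanSpace ℝ (Fin d)) :
    Dobj ℓ ρ X w α ≤ Pobj ℓ ρ X w β := by
  set t : Fin n → ℝ := fun i => inner ℝ (X i) β
  set v : EuclideanSpace ℝ (Fin d) := ∑ i, (w i * α i) • X i
  have hloss : ((∑ i, w i * (-α i * t i - ℓ i (t i)) : ℝ) : EReal) ≤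
      ∑ i, (w i : EReal) * conj (ℓ i) (-α i) := by
    push_cast
    gcongr with i
    · exact_mod_cast hw i
    · exact coe_sub_le_conj _ _ _
  have hinner : inner ℝ v β = ∑ i, w i * α i * t i := by
    simp only [v, t, sum_inner, real_inner_smul_left]
  have hP : Pobj ℓ ρ X w β
      = -(∑ i, w i * (-α i * t i - ℓ i (t i))) - (inner ℝ v β - ρ β) := by
    have hterm : ∀ i, w i * ℓ i (t i) = -(w i * (-α i * t i - ℓ i (t i))) - w i * α i * t i :=
      fun i => by ring
    rw [Pobj, Finset.sum_congr rfl fun i _ => hterm i, Finset.sum_sub_distrib,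
      Finset.sum_neg_distrib, hinner]
    ring
  rw [hP, EReal.coe_sub, EReal.coe_neg]
  exact EReal.sub_le_sub (EReal.neg_le_neg_iff.2 hloss) (coe_inner_sub_le_conjV ρ v β)

theorem Pobj_strongConvexOn {κ : ℝ} (hℓ : ∀ i, ConvexOn ℝ univ (ℓ i))
    (hρ : StrongConvexOn univ κ ρ) (hw : ∀ i, 0 ≤ w i) : StrongConvexOn univ κ (Pobj ℓ ρ X w) := by
  have hloss : ConvexOn ℝ univ (∑ i, fun β => w i * ℓ i (inner ℝ (X i) β)) :=
    ConvexOn.sum _ convex_univ fun i _ =>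
      ((hℓ i).comp_linearMap (innerₗ _ (X i))).smul (hw i)
  have hP : Pobj ℓ ρ X w = (∑ i, fun β => w i * ℓ i (inner ℝ (X i) β)) + ρ := by
    ext β
    simp [Pobj]
  simpa [hP, StrongConvexOn] using hloss.uniformConvexOn_zero.add hρ

theorem norm_sub_le_of_dualityGap {κ r : ℝ} (hκ : 0 < κ) (hℓ : ∀ i, ConvexOn ℝ univ (ℓ i))
    (hρ : StrongConvexOn univ κ ρ) (hw : ∀ i, 0 ≤ w i) {βstar : EuclideanSpace ℝ (Fin d)}
    (hmin : ∀ β, Pobj ℓ ρ X w βstar ≤ Pobj ℓ ρ X w β) {bhat : EuclideanSpace ℝ (Fin d)}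
    {ahat : Fin n → ℝ} (hr0 : 0 ≤ r)
    (hr : ((r ^ 2 : ℝ) : EReal) =
      ((2 / κ : ℝ) : EReal) * (((Pobj ℓ ρ X w bhat : ℝ) : EReal) - Dobj ℓ ρ X w ahat)) :
    ‖bhat - βstar‖ ≤ r := by
  have hweak : Dobj ℓ ρ X w ahat ≤ Pobj ℓ ρ X w βstar := Dobj_le_Pobj hw ahat βstar
  have hgrowth : Pobj ℓ ρ X w βstar + κ / 2 * ‖bhat - βstar‖ ^ 2 ≤ Pobj ℓ ρ X w bhat :=
    (Pobj_strongConvexOn hℓ hρ hw).add_sq_norm_sub_le_of_isMinOn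
      (isMinOn_univ_iff.2 hmin) (mem_univ βstar) (mem_univ bhat)
  have hne_bot : Dobj ℓ ρ X w ahat ≠ ⊥ := by
    rintro hbot
    rw [hbot, EReal.coe_sub_bot, EReal.mul_top_of_pos (by exact_mod_cast div_pos two_pos hκ)] at hr
    exact EReal.coe_ne_top _ hr
  lift Dobj ℓ ρ X w ahat to ℝ using ⟨ne_top_of_le_ne_top (EReal.coe_ne_top _) hweak, hne_bot⟩
    with D
  norm_cast at hr hweak
  have hsq : ‖bhat - βstar‖ ^ 2 ≤ r ^ 2 := by
    rw [hr, div_mul_eq_mul_div, le_div_iff₀ hκ]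
    linarith
  exact pow_le_pow_iff_left₀ (norm_nonneg _) hr0 two_ne_zero |>.1 hsq

end ERM

/-- Gap safe sample screening rule: if the interval
`[X̌ᵢβ̂ - ‖X̌ᵢ‖r, X̌ᵢβ̂ + ‖X̌ᵢ‖r]` with `r = √((2/κ)(P_w(β̂) - D_w(α̂)))` is contained in
`Z[ℓ_{yᵢ}]`, then the dual optimum (characterized by the KKT condition) satisfies `αᵢ* = 0`. -/
theorem stmt4 {n d : ℕ} (κ : ℝ) (hκ : 0 < κ)
    (ℓ : Fin n → ℝ → ℝ) (hℓ : ∀ i, ConvexOn ℝ Set.univ (ℓ i))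
    (ρ : EuclideanSpace ℝ (Fin d) → ℝ)
    (hρ : ConvexOn ℝ Set.univ (fun β => ρ β - κ / 2 * ‖β‖ ^ 2))
    (w : Fin n → ℝ) (hw : ∀ i, 0 ≤ w i)
    (X : Fin n → EuclideanSpace ℝ (Fin d))
    (βstar : EuclideanSpace ℝ (Fin d)) (hmin : ∀ β, Pobj ℓ ρ X w βstar ≤ Pobj ℓ ρ X w β)
    (bhat : EuclideanSpace ℝ (Fin d)) (ahat : Fin n → ℝ)
    (i : Fin n) (r : ℝ) (hr0 : 0 ≤ r)
    (hr : ((r ^ 2 : ℝ) : EReal) =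
      ((2 / κ : ℝ) : EReal) * (((Pobj ℓ ρ X w bhat : ℝ) : EReal) - Dobj ℓ ρ X w ahat))
    (hsub : Set.Icc ((inner ℝ (X i) bhat : ℝ) - ‖X i‖ * r) ((inner ℝ (X i) bhat : ℝ) + ‖X i‖ * r)
      ⊆ Zset (ℓ i))
    (αstar : Fin n → ℝ)
    (hKKT : ∀ j, -(αstar j) ∈ subd (ℓ j) ((inner ℝ (X j) βstar : ℝ))) :
    αstar i = 0 := by
  have hball : ‖bhat - βstar‖ ≤ r :=
    norm_sub_le_of_dualityGap hκ hℓ (strongConvexOn_iff_convex.2 hρ) hw hmin hr0 hr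
  have hzero : subd (ℓ i) (inner ℝ (X i) βstar) = {0} := hsub (inner_mem_Icc_of_norm_sub_le hball)
  simpa [hzero] using hKKT i
end

section
/- Let f: ℝ^n → ℝ and g: ℝ^d → ℝ be (finite-valued) convex functions and A ∈ ℝ^{n×d}. Then min_{v ∈ ℝ^d} [f(Av) + g(v)] = max_{u ∈ ℝ^n} [−f*(−u) − g*(A⊤u)], provided both optima are attained; furthermore at the optima v*, u*, one has −u* ∈ ∂f(Av*) and v* ∈ ∂g*(A⊤u*). -/
open Matrix

/-- Convex conjugate of a function on `ℝ^m` (with the dot product pairing),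
with values in the extended reals. -/
noncomputable def conjP {m : ℕ} (f : (Fin m → ℝ) → ℝ) (s : Fin m → ℝ) : EReal :=
  ⨆ x : Fin m → ℝ, (((∑ i, s i * x i) - f x : ℝ) : EReal)

/-- Subdifferential of a real-valued function on `ℝ^m`. -/
def subdR {m : ℕ} (f : (Fin m → ℝ) → ℝ) (x : Fin m → ℝ) : Set (Fin m → ℝ) :=
  {g | ∀ x', f x' - f x ≥ ∑ i, g i * (x' i - x i)}

/-- Subdifferential of an extended-real-valued function on `ℝ^m`. -/
def subdE {m : ℕ} (F : (Fin m → ℝ) → EReal) (x : Fin m → ℝ) : Set (Fin m → ℝ) :=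
  {s | ∀ x', F x + ((∑ i, s i * (x' i - x i) : ℝ) : EReal) ≤ F x'}


/-!
Separating the point `(0, f (A v*) + g v*)` from the open convex set
`{(y, t) | ∃ v, f (A v + y) + g v < t}` produces `u` with
`f (A v*) + g v* ≤ f x + ⟪u, x⟫ + g v - ⟪u, A v⟫` for all `x, v`, which makes the dual value at `u`
at least the primal optimum. Conversely, by Fenchel–Young, a dual value at `u*` that large forces
the same inequality for `u*`: taking `v = v*`, resp. `x = A v*`, gives the two subgradient
conditions, and taking both gives weak duality.
-/

open Set

lemma isOpen_setOf_exists_add_lt {E F : Type*} [TopologicalSpace E] [Add E] [ContinuousAdd E]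
    {f : E → ℝ} (hf : Continuous f) (g : F → ℝ) (A : F → E) :
    IsOpen {p : E × ℝ | ∃ v, f (A v + p.1) + g v < p.2} := by
  rw [ofPred_exists]
  exact isOpen_iUnion fun v => isOpen_lt (by fun_prop) continuous_snd

section Multiplier

variable {E F : Type*} [AddCommGroup E] [Module ℝ E] [AddCommGroup F] [Module ℝ F]
  {f : E → ℝ} {g : F → ℝ}

lemma convex_setOf_exists_add_lt (hf : ConvexOn ℝ univ f) (hg : ConvexOn ℝ univ g)
    (A : F →ₗ[ℝ] E) : Convex ℝ {p : E × ℝ | ∃ v, f (A v + p.1) + g v < p.2} := by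
  have hjoint : ConvexOn ℝ univ fun q : E × F => f (A q.2 + q.1) + g q.2 :=
    (hf.comp_linearMap (A ∘ₗ LinearMap.snd ℝ E F + LinearMap.fst ℝ E F)).add
      (hg.comp_linearMap (LinearMap.snd ℝ E F))
  have hproj : {p : E × ℝ | ∃ v, f (A v + p.1) + g v < p.2} =
      (LinearMap.prodMap (LinearMap.fst ℝ E F) LinearMap.id) ''
        {q : (E × F) × ℝ | q.1 ∈ univ ∧ f (A q.1.2 + q.1.1) + g q.1.2 < q.2} := by
    ext ⟨y, t⟩
    simp
  rw [hproj]
  exact hjoint.convex_strict_epigraph.linear_image _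

variable [TopologicalSpace E] [IsTopologicalAddGroup E] [ContinuousSMul ℝ E]

theorem exists_multiplier_of_forall_le (hf : ConvexOn ℝ univ f) (hfc : Continuous f)
    (hg : ConvexOn ℝ univ g) (A : F →ₗ[ℝ] E) {v₀ : F}
    (hmin : ∀ v, f (A v₀) + g v₀ ≤ f (A v) + g v) :
    ∃ φ : StrongDual ℝ E, ∀ y v, f (A v₀) + g v₀ + φ y ≤ f (A v + y) + g v := by
  set m := f (A v₀) + g v₀
  have hnotMem : ((0 : E), m) ∉ {p : E × ℝ | ∃ v, f (A v + p.1) + g v < p.2} := by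
    rintro ⟨v, hv⟩
    simp only [add_zero] at hv
    exact (hmin v).not_gt hv
  obtain ⟨L, hL⟩ := geometric_hahn_banach_open_point (convex_setOf_exists_add_lt hf hg A)
    (isOpen_setOf_exists_add_lt hfc g A) hnotMem
  set r := L (0, 1)
  have hsplit : ∀ y t, L (y, t) = L (y, 0) + t * r := fun y t => by
    rw [← smul_eq_mul, ← L.map_smul, ← map_add]; simp
  have hr : r < 0 := by
    have := hL (0, m + 1) ⟨v₀, by simp [m]⟩
    rw [hsplit, hsplit 0 m] at this
    linarith
  refine ⟨-r⁻¹ • L.comp (ContinuousLinearMap.inl ℝ E ℝ), fun y v => ?_⟩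
  refine le_of_forall_gt_imp_ge_of_dense fun t ht => ?_
  have hLt := hL (y, t) ⟨v, ht⟩
  rw [hsplit, hsplit 0 m, Prod.mk_zero_zero, map_zero, zero_add] at hLt
  have hdiv : m < (L (y, 0) + t * r) / r := (lt_div_iff_of_neg hr).2 hLt
  rw [add_div, mul_div_cancel_right₀ t hr.ne] at hdiv
  simp only [_root_.smul_apply, ContinuousLinearMap.comp_apply,
    ContinuousLinearMap.inl_apply, smul_eq_mul]
  rw [neg_mul, inv_mul_eq_div]
  linarith

end Multiplier

section Conjugate

variable {m k : ℕ} {f : (Fin m → ℝ) → ℝ} {g : (Fin k → ℝ) → ℝ}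

lemma le_conjP (f : (Fin m → ℝ) → ℝ) (s x : Fin m → ℝ) :
    ((s ⬝ᵥ x - f x : ℝ) : EReal) ≤ conjP f s :=
  le_iSup (fun x => ((s ⬝ᵥ x - f x : ℝ) : EReal)) x

lemma conjP_le {s : Fin m → ℝ} {c : ℝ} (h : ∀ x, s ⬝ᵥ x - f x ≤ c) : conjP f s ≤ c :=
  iSup_le fun x => EReal.coe_le_coe_iff.2 (h x)

lemma neg_mem_subdR_of_forall_le {u x₀ : Fin m → ℝ} (h : ∀ x, f x₀ + u ⬝ᵥ x₀ ≤ f x + u ⬝ᵥ x) :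
    -u ∈ subdR f x₀ := fun x => by
  show f x - f x₀ ≥ (-u) ⬝ᵥ (x - x₀)
  rw [neg_dotProduct, dotProduct_sub]
  linarith [h x]

lemma mem_subdE_conjP_of_forall_le {s x₀ : Fin m → ℝ}
    (h : ∀ x, s ⬝ᵥ x - f x ≤ s ⬝ᵥ x₀ - f x₀) : x₀ ∈ subdE (conjP f) s := fun t => by
  show conjP f s + ((x₀ ⬝ᵥ (t - s) : ℝ) : EReal) ≤ conjP f t
  calc _ ≤ ((s ⬝ᵥ x₀ - f x₀ : ℝ) : EReal) + ((x₀ ⬝ᵥ (t - s) : ℝ) : EReal) :=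
        add_le_add_left (conjP_le h) _
    _ = ((t ⬝ᵥ x₀ - f x₀ : ℝ) : EReal) := by
      rw [← EReal.coe_add, dotProduct_comm x₀, sub_dotProduct]
      congr 1
      ring
    _ ≤ conjP f t := le_conjP f t x₀

lemma neg_conjP_sub_conjP_le (f : (Fin m → ℝ) → ℝ) (g : (Fin k → ℝ) → ℝ) (s x : Fin m → ℝ)
    (t v : Fin k → ℝ) :
    -conjP f s - conjP g t ≤ ((f x - s ⬝ᵥ x + (g v - t ⬝ᵥ v) : ℝ) : EReal) := by
  have h := EReal.sub_le_sub (EReal.neg_le_neg_iff.2 (le_conjP f s x)) (le_conjP g t v)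
  rw [← EReal.coe_neg, ← EReal.coe_sub] at h
  convert h using 2
  ring

lemma le_neg_conjP_sub_conjP {s : Fin m → ℝ} {t : Fin k → ℝ} {a b : ℝ}
    (hf : ∀ x, s ⬝ᵥ x - f x ≤ a) (hg : ∀ v, t ⬝ᵥ v - g v ≤ b) :
    ((-a - b : ℝ) : EReal) ≤ -conjP f s - conjP g t := by
  rw [EReal.coe_sub, EReal.coe_neg]
  exact EReal.sub_le_sub (EReal.neg_le_neg_iff.2 (conjP_le hf)) (conjP_le hg)

end Conjugate

section Duality

variable {n d : ℕ} {f : (Fin n → ℝ) → ℝ} {g : (Fin d → ℝ) → ℝ} {A : Matrix (Fin n) (Fin d) ℝ}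

lemma transpose_mulVec_dotProduct (A : Matrix (Fin n) (Fin d) ℝ) (u : Fin n → ℝ)
    (v : Fin d → ℝ) : (Aᵀ *ᵥ u) ⬝ᵥ v = u ⬝ᵥ (A *ᵥ v) := by
  rw [mulVec_transpose, ← dotProduct_mulVec]

theorem exists_dotProduct_multiplier (hf : ConvexOn ℝ univ f) (hg : ConvexOn ℝ univ g)
    (A : Matrix (Fin n) (Fin d) ℝ) {v₀ : Fin d → ℝ}
    (hmin : ∀ v, f (A *ᵥ v₀) + g v₀ ≤ f (A *ᵥ v) + g v) :
    ∃ u, ∀ x v, f (A *ᵥ v₀) + g v₀ ≤ f x + u ⬝ᵥ x + (g v - u ⬝ᵥ (A *ᵥ v)) := by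
  have hfc : Continuous f := continuousOn_univ.1 (hf.continuousOn isOpen_univ)
  obtain ⟨φ, hφ⟩ := exists_multiplier_of_forall_le hf hfc hg A.mulVecLin hmin
  set w := (dotProductEquiv ℝ (Fin n)).symm φ.toLinearMap
  have hw : ∀ y, w ⬝ᵥ y = φ y :=
    LinearMap.congr_fun ((dotProductEquiv ℝ (Fin n)).apply_symm_apply φ.toLinearMap)
  refine ⟨-w, fun x v => ?_⟩
  have := hφ (x - A *ᵥ v) v
  simp only [mulVecLin_apply, add_sub_cancel, ← hw, dotProduct_sub] at this
  rw [neg_dotProduct, neg_dotProduct]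
  linarith

lemma neg_conjP_neg_sub_conjP_le (u : Fin n → ℝ) (x : Fin n → ℝ) (v : Fin d → ℝ) :
    -conjP f (-u) - conjP g (Aᵀ *ᵥ u) ≤ ((f x + u ⬝ᵥ x + (g v - u ⬝ᵥ (A *ᵥ v)) : ℝ) : EReal) := by
  simpa [neg_dotProduct, transpose_mulVec_dotProduct] using
    neg_conjP_sub_conjP_le f g (-u) x (Aᵀ *ᵥ u) v

lemma coe_le_neg_conjP_neg_sub_conjP {u : Fin n → ℝ} {v₀ : Fin d → ℝ}
    (hu : ∀ x v, f (A *ᵥ v₀) + g v₀ ≤ f x + u ⬝ᵥ x + (g v - u ⬝ᵥ (A *ᵥ v))) :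
    ((f (A *ᵥ v₀) + g v₀ : ℝ) : EReal) ≤ -conjP f (-u) - conjP g (Aᵀ *ᵥ u) := by
  convert le_neg_conjP_sub_conjP (a := g v₀ - u ⬝ᵥ (A *ᵥ v₀) - (f (A *ᵥ v₀) + g v₀))
    (b := f (A *ᵥ v₀) + u ⬝ᵥ (A *ᵥ v₀) - (f (A *ᵥ v₀) + g v₀))
    (fun x => ?_) (fun v => ?_) using 2
  · ring
  · rw [neg_dotProduct]
    linarith [hu x v₀]
  · rw [transpose_mulVec_dotProduct]
    linarith [hu (A *ᵥ v₀) v]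

end Duality

/-- Fenchel's duality theorem (finite-valued case, optima attained). -/
theorem stmt18 {n d : ℕ} (f : (Fin n → ℝ) → ℝ) (g : (Fin d → ℝ) → ℝ)
    (hf : ConvexOn ℝ Set.univ f) (hg : ConvexOn ℝ Set.univ g)
    (A : Matrix (Fin n) (Fin d) ℝ)
    (vstar : Fin d → ℝ) (ustar : Fin n → ℝ)
    (hprimal : ∀ v, f (A.mulVec vstar) + g vstar ≤ f (A.mulVec v) + g v)
    (hdual : ∀ u : Fin n → ℝ,
      -conjP f (-u) - conjP g (Aᵀ.mulVec u) ≤ -conjP f (-ustar) - conjP g (Aᵀ.mulVec ustar)) :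
    ((f (A.mulVec vstar) + g vstar : ℝ) : EReal) =
        -conjP f (-ustar) - conjP g (Aᵀ.mulVec ustar) ∧
      (-ustar) ∈ subdR f (A.mulVec vstar) ∧
      vstar ∈ subdE (conjP g) (Aᵀ.mulVec ustar) := by
  set m := f (A *ᵥ vstar) + g vstar
  obtain ⟨u, hu⟩ := exists_dotProduct_multiplier hf hg A hprimal
  have hstrong : (m : EReal) ≤ -conjP f (-ustar) - conjP g (Aᵀ *ᵥ ustar) :=
    (coe_le_neg_conjP_neg_sub_conjP hu).trans (hdual u)
  have hsaddle : ∀ x v, m ≤ f x + ustar ⬝ᵥ x + (g v - ustar ⬝ᵥ (A *ᵥ v)) := fun x v =>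
    EReal.coe_le_coe_iff.1 (hstrong.trans (neg_conjP_neg_sub_conjP_le ustar x v))
  refine ⟨le_antisymm hstrong ?_, neg_mem_subdR_of_forall_le fun x => ?_,
    mem_subdE_conjP_of_forall_le fun v => ?_⟩
  · convert neg_conjP_neg_sub_conjP_le ustar (A *ᵥ vstar) vstar using 2
    ring
  · linarith [hsaddle x vstar]
  · rw [transpose_mulVec_dotProduct, transpose_mulVec_dotProduct]
    linarith [hsaddle (A *ᵥ vstar) v]
end
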